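/- For K ≥ 1 let D_K be the K×K real matrix with (D_K)_{1,j} = 1/2 for all j, (D_K)_{i,j} = 1/4 for i ≥ 2 and j ≥ i−1, and (D_K)_{i,j} = 0 otherwise. Then for every k ≥ 1 and every K ≥ k+1, the first column of the k-th power of D_K is given by: (D_K^k)_{1,1} = C(2k, k)/4^k, (D_K^k)_{i,1} = C(2k+1−i, k+1−i)/4^k for 2 ≤ i ≤ k+1, and (D_K^k)_{i,1} = 0 for i > k+1, where C(a,b) denotes the binomial coefficient. In particular (D_K^k)_{1,1} ≥ c/√k for some constant c > 0, so Σ_{k ≥ 1} (D_{k+1}^k)_{1,1} = ∞. -/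

import Mathlib

/-!
Row `i ≥ 1` of `D_K` takes `1/4` of the tail sum, from index `i - 1` on, of the column it
multiplies, and row `0` takes `1/2` of the full sum. For the candidate column
`m ↦ C(2k - m, k - m) / 4^k` the hockey-stick identity evaluates the tail from `a` as
`C(2k + 1 - a, k - a) / 4^k`, which is the candidate for `k + 1`; row `0` also needs
`C(2k + 2, k + 1) = 2 C(2k + 1, k)`. The bound `C(2k, k) / 4^k ≥ 1 / (2√k)`, squared to
`16^k ≤ 4k C(2k, k)^2`, follows by induction from
`(k + 1) C(2k + 2, k + 1) = 2 (2k + 1) C(2k, k)`, and divergence from the weaker bound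
`C(2k, k) / 4^k ≥ 1 / (2k)` and the harmonic series.
-/

open MeasureTheory Set Filter Topology

/-- The matrix `D_K` (1-based indexing in the paper; `i : Fin K` corresponds to
row `i+1`): first row all `1/2`, rows `i ≥ 2` have `1/4` in columns `j ≥ i-1`,
zeros elsewhere. -/
noncomputable def DK (K : ℕ) : Matrix (Fin K) (Fin K) ℝ :=
  fun i j =>
    if i.val = 0 then 1/2
    else if i.val ≤ j.val + 1 then 1/4
    else 0

open Finset

theorem Nat.sum_Icc_choose_two_mul_sub {a k : ℕ} (ha : a ≤ k) :
    ∑ m ∈ Finset.Icc a k, (2 * k - m).choose (k - m) = (2 * k + 1 - a).choose (k - a) := by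
  calc ∑ m ∈ Finset.Icc a k, (2 * k - m).choose (k - m)
      = ∑ m ∈ Finset.Icc a k, (2 * k - m).choose k :=
        sum_congr rfl fun m hm => by
          rw [← choose_symm (by omega), show 2 * k - m - (k - m) = k by grind]
    _ = ∑ m ∈ Finset.Icc k (2 * k - a), m.choose k :=
        sum_nbij' (2 * k - ·) (2 * k - ·) (by grind) (by grind) (by grind) (by grind) (by simp)
    _ = (2 * k + 1 - a).choose (k - a) := by
        rw [sum_Icc_choose, ← choose_symm (by omega)]
        congr 1 <;> omega

theorem DK_apply (K : ℕ) (i j : Fin K) :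
    DK K i j = if i.val = 0 then 1 / 2 else if i.val ≤ j.val + 1 then 1 / 4 else 0 :=
  rfl

/-- Entry `m` (0-based) of the first column of `DK K ^ k`, whenever `k + 1 ≤ K`. -/
noncomputable def firstColumn (k m : ℕ) : ℝ :=
  if m ≤ k then ((2 * k - m).choose (k - m) : ℝ) / 4 ^ k else 0

theorem firstColumn_zero_right (k : ℕ) : firstColumn k 0 = (k.centralBinom : ℝ) / 4 ^ k := by
  simp [firstColumn, Nat.centralBinom_eq_two_mul_choose]

theorem firstColumn_succ_zero (k : ℕ) : firstColumn (k + 1) 0 = 2 * firstColumn (k + 1) 1 := by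
  have h : (2 * (k + 1)).choose (k + 1) = 2 * (2 * k + 1).choose k := by
    rw [show 2 * (k + 1) = 2 * k + 1 + 1 by ring, Nat.choose_succ_succ, Nat.choose_symm_half]; ring
  simp [firstColumn, h, mul_div_assoc, show 2 * (k + 1) - 1 = 2 * k + 1 by omega]

theorem sum_Ico_firstColumn {k n : ℕ} (hn : k + 1 ≤ n) (a : ℕ) :
    ∑ m ∈ Finset.Ico a n, firstColumn k m = 4 * firstColumn (k + 1) (a + 1) := by
  by_cases ha : a ≤ k
  · have hterm : ∀ m ∈ Finset.Icc a k,
        firstColumn k m = ((2 * k - m).choose (k - m) : ℝ) / 4 ^ k :=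
      fun m hm => if_pos (Finset.mem_Icc.1 hm).2
    have hsub : Finset.Icc a k ⊆ Finset.Ico a n := fun m hm => by
      simp only [Finset.mem_Icc, Finset.mem_Ico] at hm ⊢; omega
    have hzero : ∀ m ∈ Finset.Ico a n, m ∉ Finset.Icc a k → firstColumn k m = 0 :=
      fun m h₁ h₂ => if_neg (by simp only [Finset.mem_Icc, Finset.mem_Ico] at h₁ h₂; omega)
    rw [← sum_subset hsub hzero, sum_congr rfl hterm, ← sum_div, ← Nat.cast_sum,
      Nat.sum_Icc_choose_two_mul_sub ha, firstColumn, if_pos (by omega), pow_succ,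
      show 2 * (k + 1) - (a + 1) = 2 * k + 1 - a by omega, show k + 1 - (a + 1) = k - a by omega]
    field_simp
  · rw [firstColumn, if_neg (by omega), mul_zero]
    exact sum_eq_zero fun m hm => if_neg (by simp only [Finset.mem_Ico] at hm; omega)

theorem sum_DK_mul_firstColumn {k K : ℕ} (hK : k + 2 ≤ K) (i : Fin K) :
    ∑ x, DK K i x * firstColumn k x = firstColumn (k + 1) i := by
  have hsum (a : ℕ) : ∑ x : Fin K, (if a ≤ x.val then firstColumn k x else 0)
      = 4 * firstColumn (k + 1) (a + 1) := by
    rw [Fin.sum_univ_eq_sum_range (fun m => if a ≤ m then firstColumn k m else 0), ← sum_filter,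
      show (range K).filter (a ≤ ·) = Finset.Ico a K by
        ext m; simp only [mem_filter, Finset.mem_range, Finset.mem_Ico]; omega]
    exact sum_Ico_firstColumn (by omega) a
  by_cases hi : i.val = 0
  · have := hsum 0
    simp only [zero_le, if_true] at this
    simp only [DK_apply, hi, if_true, ← mul_sum, this, firstColumn_succ_zero]
    ring
  · have hrow (x : Fin K) : DK K i x * firstColumn k x
        = 1 / 4 * if i.val - 1 ≤ x.val then firstColumn k x else 0 := by
      simp only [DK_apply, if_neg hi, show i.val ≤ x.val + 1 ↔ i.val - 1 ≤ x.val by omega]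
      split_ifs <;> ring
    simp only [hrow, ← mul_sum, hsum, Nat.sub_add_cancel (Nat.pos_of_ne_zero hi)]
    ring

theorem DK_pow_apply_of_val_eq_zero {k K : ℕ} (hK : k + 1 ≤ K) (i : Fin K) {j : Fin K}
    (hj : j.val = 0) : (DK K ^ k) i j = firstColumn k i := by
  induction k generalizing i with
  | zero =>
    simp [Matrix.one_apply, firstColumn, Fin.ext_iff, hj]
  | succ k ih =>
    rw [pow_succ', Matrix.mul_apply]
    have hcol (x : Fin K) : (DK K ^ k) x j = firstColumn k x := ih (by omega) x
    simp only [hcol]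
    exact sum_DK_mul_firstColumn hK i

theorem Nat.four_pow_two_mul_le_mul_centralBinom_sq {n : ℕ} (hn : 0 < n) :
    4 ^ (2 * n) ≤ 4 * n * n.centralBinom ^ 2 := by
  induction n, hn using Nat.le_induction with
  | base => decide
  | succ n hn ih =>
    have hrec := Nat.succ_mul_centralBinom_succ n
    suffices (n + 1) * 4 ^ (2 * (n + 1)) ≤ (n + 1) * (4 * (n + 1) * (n + 1).centralBinom ^ 2) from
      Nat.le_of_mul_le_mul_left this (by omega)
    calc (n + 1) * 4 ^ (2 * (n + 1)) = 16 * ((n + 1) * 4 ^ (2 * n)) := by ring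
      _ ≤ 16 * ((n + 1) * (4 * n * n.centralBinom ^ 2)) := by gcongr
      _ = 16 * ((4 * n ^ 2 + 4 * n) * n.centralBinom ^ 2) := by ring
      _ ≤ 16 * ((2 * n + 1) ^ 2 * n.centralBinom ^ 2) := by gcongr; nlinarith
      _ = (n + 1) * (4 * (n + 1) * (n + 1).centralBinom ^ 2) := by
        rw [show (n + 1) * (4 * (n + 1) * (n + 1).centralBinom ^ 2)
          = 4 * ((n + 1) * (n + 1).centralBinom) ^ 2 by ring, hrec]
        ring

theorem one_div_two_mul_sqrt_le_centralBinom_div_four_pow {n : ℕ} (hn : 0 < n) :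
    1 / (2 * Real.sqrt n) ≤ (n.centralBinom : ℝ) / 4 ^ n := by
  have h : (4 : ℝ) ^ (2 * n) ≤ 4 * n * n.centralBinom ^ 2 := by
    exact_mod_cast Nat.four_pow_two_mul_le_mul_centralBinom_sq hn
  have hsq : ((4 : ℝ) ^ n) ^ 2 ≤ (2 * Real.sqrt n * n.centralBinom) ^ 2 := by
    rw [mul_pow, mul_pow, Real.sq_sqrt n.cast_nonneg, ← pow_mul, mul_comm n 2]
    linarith
  rw [div_le_div_iff₀ (by positivity) (by positivity), one_mul, mul_comm]
  exact le_of_pow_le_pow_left₀ two_ne_zero (by positivity) hsq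

theorem one_div_two_mul_le_centralBinom_div_four_pow {n : ℕ} (hn : 0 < n) :
    1 / (2 * (n : ℝ)) ≤ (n.centralBinom : ℝ) / 4 ^ n := by
  rw [div_le_div_iff₀ (by positivity) (by positivity), one_mul, mul_comm]
  exact_mod_cast Nat.four_pow_le_two_mul_self_mul_centralBinom n hn

/-- for `k ≥ 1` and `K ≥ k+1`, the first column of `D_K^k` is given
by binomial coefficients: `(D_K^k)_{1,1} = C(2k,k)/4^k`,
`(D_K^k)_{i,1} = C(2k+1-i, k+1-i)/4^k` for `2 ≤ i ≤ k+1`, and `0` for `i > k+1`.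
In particular `(D_K^k)_{1,1} ≥ c/√k` for some `c > 0`, so the series
`∑_{k ≥ 1} (D_{k+1}^k)_{1,1}` diverges. -/
theorem stmt19 :
    (∀ k K : ℕ, 1 ≤ k → k + 1 ≤ K → ∀ i j : Fin K, j.val = 0 →
      (DK K ^ k) i j =
        (if i.val = 0 then (Nat.choose (2*k) k : ℝ) / 4^k
         else if i.val ≤ k then
           (Nat.choose (2*k - i.val) (k - i.val) : ℝ) / 4^k
         else 0)) ∧
    (∃ c : ℝ, 0 < c ∧ ∀ k K : ℕ, 1 ≤ k → k + 1 ≤ K → ∀ i j : Fin K,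
      i.val = 0 → j.val = 0 → c / Real.sqrt k ≤ (DK K ^ k) i j) ∧
    ¬ Summable (fun k : ℕ => ((DK (k+2)) ^ (k+1)) 0 0) := by
  refine ⟨fun k K _ hK i j hj => ?_, ⟨1 / 2, by norm_num, fun k K hk hK i j hi hj => ?_⟩, ?_⟩
  · rw [DK_pow_apply_of_val_eq_zero hK i hj, firstColumn]
    by_cases hi : i.val = 0 <;> simp [hi]
  · rw [DK_pow_apply_of_val_eq_zero hK i hj, hi, firstColumn_zero_right, div_div]
    exact one_div_two_mul_sqrt_le_centralBinom_div_four_pow hk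
  · have hharmonic : ¬ Summable (fun k : ℕ => 1 / ((k : ℝ) + 1)) := by
      exact_mod_cast mt (summable_nat_add_iff 1).1 Real.not_summable_one_div_natCast
    have hle (k : ℕ) : 1 / ((k : ℝ) + 1) ≤ 2 * (DK (k + 2) ^ (k + 1)) 0 0 := by
      have h := one_div_two_mul_le_centralBinom_div_four_pow k.succ_pos
      rw [DK_pow_apply_of_val_eq_zero le_rfl 0 rfl, Fin.val_zero, firstColumn_zero_right]
      push_cast at h
      calc 1 / ((k : ℝ) + 1) = 2 * (1 / (2 * ((k : ℝ) + 1))) := by field_simp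
        _ ≤ _ := by gcongr
    exact fun hsum => hharmonic ((hsum.mul_left 2).of_nonneg_of_le (fun k => by positivity) hle)
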